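/- arXiv:2108.04580 — 2 statements merged into one kernel-verified Lean document; each statement's English description precedes it below -/
import Mathlib

section
/- (Gauge function for the symmetric gauge) Let a ∈ [−1,1) with a ≠ 0, α ∈ (0,π), γ ∈ [0,π/2]. Define φ on the closed half-plane {x₂ ≥ 0} by φ(x₁,x₂) = ((1/2)x₁x₂ + ((a−1)/2)(cos α/sin α)x₂²)·cos γ on the sector where x₁ sin α − x₂ cos α > 0, and φ(x₁,x₂) = (a/2)x₁x₂·cos γ on the sector where x₁ sin α − x₂ cos α < 0. Then φ extends continuously across the ray {x₁ sin α − x₂ cos α = 0, x₂ ≥ 0} (both formulas agree there), and on each open sector φ is smooth with ∇φ = A̲_{α,γ,a} − Ă_{α,γ,a}, where Ă_{α,γ,a}(x) = (cos γ/2)·s̲(x)·(−x₂, x₁) is the symmetric-gauge potential (with s̲ = 1 on the first sector and a on the second); in particular A̲_{α,γ,a} and Ă_{α,γ,a} are gauge-equivalent on the half-plane. -/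
open MeasureTheory Real Set Filter

noncomputable section

namespace MagStep

/-- `j`-th coordinate basis vector of `ℝ³`. -/
def e3 (j : Fin 3) : Fin 3 → ℝ := Pi.single j 1

/-- `j`-th coordinate basis vector of `ℝ²`. -/
def e2 (j : Fin 2) : Fin 2 → ℝ := Pi.single j 1

/-- The open half-space `{x₂ > 0}` of `ℝ³` (coordinates indexed `0,1,2` for `x₁,x₂,x₃`). -/
def H3 : Set (Fin 3 → ℝ) := {x | 0 < x 1}

/-- The open half-plane `{x₂ > 0}` of `ℝ²`. -/
def H2 : Set (Fin 2 → ℝ) := {x | 0 < x 1}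

/-- `w(x) = x₁ sin α - x₂ cos α` on `ℝ³`. -/
def w3 (α : ℝ) (x : Fin 3 → ℝ) : ℝ := x 0 * Real.sin α - x 1 * Real.cos α

/-- `w(x) = x₁ sin α - x₂ cos α` on `ℝ²`. -/
def w2 (α : ℝ) (x : Fin 2 → ℝ) : ℝ := x 0 * Real.sin α - x 1 * Real.cos α

/-- The step function: `1` where `w > 0`, `a` where `w < 0`. -/
def step2 (α a : ℝ) (x : Fin 2 → ℝ) : ℝ := if 0 < w2 α x then 1 else a

/-- Bottom of the spectrum (infimum of the Rayleigh quotient over nonzero smooth compactly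
supported functions) of the magnetic operator `-(∇ - iA)²` on `S ⊆ ℝ³`. -/
def groundEnergy3 (A : (Fin 3 → ℝ) → Fin 3 → ℝ) (S : Set (Fin 3 → ℝ)) : ℝ :=
  sInf { r : ℝ | ∃ u : (Fin 3 → ℝ) → ℂ, ContDiff ℝ (⊤ : ℕ∞) u ∧ HasCompactSupport u ∧
    (0 < ∫ x in S, ‖u x‖ ^ 2) ∧
    r = (∫ x in S, ∑ j : Fin 3,
          ‖fderiv ℝ u x (e3 j) - Complex.I * (A x j : ℂ) * u x‖ ^ 2) /
        ∫ x in S, ‖u x‖ ^ 2 }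

/-- Bottom of the spectrum of `-(∇ - iA)² + V` on `S ⊆ ℝ²`. -/
def groundEnergy2 (A : (Fin 2 → ℝ) → Fin 2 → ℝ) (V : (Fin 2 → ℝ) → ℝ)
    (S : Set (Fin 2 → ℝ)) : ℝ :=
  sInf { r : ℝ | ∃ u : (Fin 2 → ℝ) → ℂ, ContDiff ℝ (⊤ : ℕ∞) u ∧ HasCompactSupport u ∧
    (0 < ∫ x in S, ‖u x‖ ^ 2) ∧
    r = (∫ x in S, ((∑ j : Fin 2,
          ‖fderiv ℝ u x (e2 j) - Complex.I * (A x j : ℂ) * u x‖ ^ 2)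
          + V x * ‖u x‖ ^ 2)) /
        ∫ x in S, ‖u x‖ ^ 2 }

/-- The discontinuous vector potential `A_{α,γ,a}` on the half-space. -/
def Apot3 (α γ a : ℝ) (x : Fin 3 → ℝ) : Fin 3 → ℝ :=
  ![0,
    if 0 < w3 α x then
      x 0 * Real.cos γ - (1 - a) * (Real.cos α / Real.sin α) * x 1 * Real.cos γ
    else a * (x 0 * Real.cos γ),
    if 0 < w3 α x then (x 1 * Real.cos α - x 0 * Real.sin α) * Real.sin γ
    else a * ((x 1 * Real.cos α - x 0 * Real.sin α) * Real.sin γ)]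

/-- `λ_{α,γ,a}`: bottom of the spectrum of the magnetic Neumann Laplacian on the half-space
with the discontinuous field. -/
def lambda3D (α γ a : ℝ) : ℝ := groundEnergy3 (Apot3 α γ a) H3

/-- `A_ν(x) = (0, x₁ cos ν, -x₁ sin ν)`, with `curl A_ν = (0, sin ν, cos ν)`. -/
def Anu (ν : ℝ) (x : Fin 3 → ℝ) : Fin 3 → ℝ := ![0, x 0 * Real.cos ν, -(x 0 * Real.sin ν)]

/-- `ζ_ν`: bottom of the spectrum of the Neumann realization on the half-space with a constant
unit field making angle `ν` with the boundary. -/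
def zeta (ν : ℝ) : ℝ := groundEnergy3 (Anu ν) H3

/-- `μ_a(ξ)`: bottom of the spectrum of the 1D fiber operator with step `σ_a`. -/
def mu (a ξ : ℝ) : ℝ :=
  sInf { r : ℝ | ∃ u : ℝ → ℂ, ContDiff ℝ (⊤ : ℕ∞) u ∧ HasCompactSupport u ∧
    (0 < ∫ t : ℝ, ‖u t‖ ^ 2) ∧
    r = (∫ t : ℝ, (‖deriv u t‖ ^ 2 +
          ((if 0 < t then 1 else a) * t - ξ) ^ 2 * ‖u t‖ ^ 2)) /
        ∫ t : ℝ, ‖u t‖ ^ 2 }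

/-- `β_a = inf_ξ μ_a(ξ)`. -/
def beta (a : ℝ) : ℝ := ⨅ ξ : ℝ, mu a ξ

/-- The projected vector potential `A̲_{α,γ,a}` on the half-plane. -/
def Aund (α γ a : ℝ) (x : Fin 2 → ℝ) : Fin 2 → ℝ :=
  ![0,
    if 0 < w2 α x then
      x 0 * Real.cos γ - (1 - a) * (Real.cos α / Real.sin α) * x 1 * Real.cos γ
    else a * (x 0 * Real.cos γ)]

/-- The electric potential `V_{α,γ,a,τ}(x) = (s̲(x) w(x) sin γ - τ)²`. -/
def Vpot (α γ a τ : ℝ) (x : Fin 2 → ℝ) : ℝ :=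
  (step2 α a x * w2 α x * Real.sin γ - τ) ^ 2

/-- `σ(α,γ,a,τ)`: bottom of the spectrum of the reduced 2D fiber operator. -/
def sigma2D (α γ a τ : ℝ) : ℝ := groundEnergy2 (Aund α γ a) (Vpot α γ a τ) H2

/-- `Σ(α,γ,a,τ,R)`: Rayleigh quotient infimum over nonzero smooth compactly supported
functions vanishing on the closed ball of radius `R` centered at the origin. -/
def SigmaR (α γ a τ R : ℝ) : ℝ :=
  sInf { r : ℝ | ∃ u : (Fin 2 → ℝ) → ℂ, ContDiff ℝ (⊤ : ℕ∞) u ∧ HasCompactSupport u ∧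
    (∀ x ∈ Metric.closedBall (0 : Fin 2 → ℝ) R, u x = 0) ∧
    (0 < ∫ x in H2, ‖u x‖ ^ 2) ∧
    r = (∫ x in H2, ((∑ j : Fin 2,
          ‖fderiv ℝ u x (e2 j) - Complex.I * (Aund α γ a x j : ℂ) * u x‖ ^ 2)
          + Vpot α γ a τ x * ‖u x‖ ^ 2)) /
        ∫ x in H2, ‖u x‖ ^ 2 }

/-- `σ_ess(α,γ,a,τ)`: the Persson (essential spectrum) threshold. -/
def sigmaEss (α γ a τ : ℝ) : ℝ := sSup ((fun R => SigmaR α γ a τ R) '' Ioi (0 : ℝ))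

/-- The explicit constant `A[α,γ,a]`. -/
def Aconst (α γ a : ℝ) : ℝ :=
  (1 / 128) * (-1 + Real.cosh π / Real.sinh π) *
    (π * Real.cos γ ^ 2 *
        (4 * (a - 1) * ((a - Real.exp π) * Real.exp (π - α) + (a * Real.exp π - 1) * Real.exp α)
          - (a - 1) ^ 2 * (Real.exp (2 * π - 2 * α) + Real.exp (2 * α))
          - 2 * Real.exp π * (-4 * a + (3 - 2 * a + 3 * a ^ 2) * Real.cosh π))
      + 4 * (Real.exp (2 * π) - 1) *
          (-(a ^ 2 * (π - α) + α) * (-3 + Real.cos (2 * γ))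
            + 2 * (a ^ 2 - 1) * Real.sin γ ^ 2 * Real.sin (2 * α)))

/-- The gauge function `φ`. -/
def phi (α γ a : ℝ) (x : Fin 2 → ℝ) : ℝ :=
  if 0 < w2 α x then
    ((1 / 2) * x 0 * x 1 + ((a - 1) / 2) * (Real.cos α / Real.sin α) * x 1 ^ 2) * Real.cos γ
  else (a / 2) * x 0 * x 1 * Real.cos γ

/-- The symmetric-gauge potential `Ă_{α,γ,a}(x) = (cos γ / 2) s̲(x) (-x₂, x₁)`. -/
def Abreve (α γ a : ℝ) (x : Fin 2 → ℝ) : Fin 2 → ℝ :=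
  ![-(Real.cos γ / 2 * step2 α a x * x 1), Real.cos γ / 2 * step2 α a x * x 0]

/-! On each open sector `φ` coincides with a quadratic `p x₁ x₂ + c x₂²`, with `p = s̲ cos γ / 2`,
whose partial derivatives `(p x₂, p x₁ + 2 c x₂)` are exactly the components of `A̲ - Ă` there;
since the sectors are open, `φ` has the same partial derivatives. On the ray
`x₁ sin α = x₂ cos α` the term `cot α · x₂²` becomes `x₁ x₂`, so the two formulas agree. -/

theorem continuous_w2 (α : ℝ) : Continuous (w2 α) := by
  unfold w2
  fun_prop

theorem _root_.Filter.EventuallyEq.comp_update {ι X β : Type*} [DecidableEq ι]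
    [TopologicalSpace X] {f g : (ι → X) → β} {x : ι → X} (h : f =ᶠ[nhds x] g) (j : ι) :
    (fun t => f (Function.update x j t)) =ᶠ[nhds (x j)] fun t => g (Function.update x j t) := by
  refine h.comp_tendsto ?_
  simpa using ((continuous_const (y := x)).update j continuous_id).tendsto (x j)

def sectorQuadratic (p c : ℝ) (x : Fin 2 → ℝ) : ℝ := p * x 0 * x 1 + c * x 1 ^ 2

def sectorQuadraticGrad (p c : ℝ) (x : Fin 2 → ℝ) : Fin 2 → ℝ := ![p * x 1, p * x 0 + 2 * c * x 1]

theorem contDiff_sectorQuadratic (p c : ℝ) {n : WithTop ℕ∞} :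
    ContDiff ℝ n (sectorQuadratic p c) := by
  unfold sectorQuadratic
  fun_prop

theorem hasDerivAt_sectorQuadratic_update (p c : ℝ) (x : Fin 2 → ℝ) (j : Fin 2) :
    HasDerivAt (fun t => sectorQuadratic p c (Function.update x j t))
      (sectorQuadraticGrad p c x j) (x j) := by
  fin_cases j
  · simp only [sectorQuadratic, sectorQuadraticGrad, Fin.zero_eta, Function.update_self,
      Function.update_of_ne Fin.zero_lt_one.ne', Matrix.cons_val_zero]
    simpa using (((hasDerivAt_id (x 0)).const_mul p).mul_const (x 1)).add_const (c * x 1 ^ 2)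
  · simp only [sectorQuadratic, sectorQuadraticGrad, Fin.mk_one, Function.update_self,
      Function.update_of_ne Fin.zero_lt_one.ne, Matrix.cons_val_one, Matrix.cons_val_zero]
    exact (((hasDerivAt_id (x 1)).const_mul (p * x 0)).add
      ((hasDerivAt_pow 2 (x 1)).const_mul c)).congr_deriv (by ring)

section Sectors

variable {α γ a : ℝ} {x : Fin 2 → ℝ}

theorem phi_of_pos (hw : 0 < w2 α x) :
    phi α γ a x = sectorQuadratic (cos γ / 2) ((a - 1) / 2 * (cos α / sin α) * cos γ) x := by
  rw [phi, if_pos hw, sectorQuadratic]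
  ring

theorem phi_of_nonpos (hw : w2 α x ≤ 0) : phi α γ a x = sectorQuadratic (a * cos γ / 2) 0 x := by
  rw [phi, if_neg hw.not_gt, sectorQuadratic]
  ring

theorem phi_eventuallyEq_of_pos (hw : 0 < w2 α x) :
    phi α γ a =ᶠ[nhds x] sectorQuadratic (cos γ / 2) ((a - 1) / 2 * (cos α / sin α) * cos γ) :=
  ((continuous_w2 α).continuousAt.eventually (lt_mem_nhds hw)).mono fun _ => phi_of_pos

theorem phi_eventuallyEq_of_neg (hw : w2 α x < 0) :
    phi α γ a =ᶠ[nhds x] sectorQuadratic (a * cos γ / 2) 0 :=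
  ((continuous_w2 α).continuousAt.eventually (gt_mem_nhds hw)).mono fun _ h => phi_of_nonpos h.le

theorem Aund_sub_Abreve_of_pos (hw : 0 < w2 α x) :
    Aund α γ a x - Abreve α γ a x =
      sectorQuadraticGrad (cos γ / 2) ((a - 1) / 2 * (cos α / sin α) * cos γ) x := by
  ext j
  fin_cases j <;> simp only [Fin.zero_eta, Fin.mk_one, Pi.sub_apply, Aund, Abreve,
    sectorQuadraticGrad, step2, if_pos hw, Matrix.cons_val_zero, Matrix.cons_val_one] <;> ring

theorem Aund_sub_Abreve_of_neg (hw : w2 α x < 0) :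
    Aund α γ a x - Abreve α γ a x = sectorQuadraticGrad (a * cos γ / 2) 0 x := by
  ext j
  fin_cases j <;> simp only [Fin.zero_eta, Fin.mk_one, Pi.sub_apply, Aund, Abreve,
    sectorQuadraticGrad, step2, if_neg hw.not_gt, Matrix.cons_val_zero, Matrix.cons_val_one] <;> ring

end Sectors

theorem phi_branches_agree_of_w2_eq_zero {α γ a : ℝ} {x : Fin 2 → ℝ} (hs : sin α ≠ 0)
    (hw : w2 α x = 0) :
    ((1 / 2) * x 0 * x 1 + ((a - 1) / 2) * (cos α / sin α) * x 1 ^ 2) * cos γ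
      = (a / 2) * x 0 * x 1 * cos γ := by
  have hx0 : x 1 * cos α / sin α = x 0 := by
    rw [div_eq_iff hs]
    linarith [show w2 α x = x 0 * sin α - x 1 * cos α from rfl]
  rw [← hx0]
  ring

theorem gauge_function_general (a α γ : ℝ) (hα : α ∈ Ioo 0 π) :
    (∀ x : Fin 2 → ℝ, 0 ≤ x 1 → w2 α x = 0 →
      ((1 / 2) * x 0 * x 1 + ((a - 1) / 2) * (Real.cos α / Real.sin α) * x 1 ^ 2) * Real.cos γ
        = (a / 2) * x 0 * x 1 * Real.cos γ) ∧
    ContDiffOn ℝ (⊤ : ℕ∞) (phi α γ a) {x : Fin 2 → ℝ | 0 < x 1 ∧ 0 < w2 α x} ∧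
    ContDiffOn ℝ (⊤ : ℕ∞) (phi α γ a) {x : Fin 2 → ℝ | 0 < x 1 ∧ w2 α x < 0} ∧
    (∀ x : Fin 2 → ℝ, 0 < x 1 → w2 α x ≠ 0 → ∀ j : Fin 2,
      HasDerivAt (fun t => phi α γ a (Function.update x j t))
        (Aund α γ a x j - Abreve α γ a x j) (x j)) := by
  have hs : sin α ≠ 0 := (sin_pos_of_pos_of_lt_pi hα.1 hα.2).ne'
  refine ⟨fun x _ hw => phi_branches_agree_of_w2_eq_zero hs hw,
    (contDiff_sectorQuadratic _ _).contDiffOn.congr fun x hx => phi_of_pos hx.2,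
    (contDiff_sectorQuadratic _ _).contDiffOn.congr fun x hx => phi_of_nonpos hx.2.le,
    fun x _ hw j => ?_⟩
  rw [← Pi.sub_apply]
  rcases hw.lt_or_gt with hneg | hpos
  · rw [Aund_sub_Abreve_of_neg hneg]
    exact (hasDerivAt_sectorQuadratic_update _ _ x j).congr_of_eventuallyEq
      ((phi_eventuallyEq_of_neg hneg).comp_update j)
  · rw [Aund_sub_Abreve_of_pos hpos]
    exact (hasDerivAt_sectorQuadratic_update _ _ x j).congr_of_eventuallyEq
      ((phi_eventuallyEq_of_pos hpos).comp_update j)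

/-- **Gauge function for the symmetric gauge.** The two formulas for `φ` agree on the
discontinuity ray, `φ` is smooth on each open sector, and there `∇φ = A̲ - Ă`. -/
theorem gauge_function (a α γ : ℝ) (ha : a ∈ Ico (-1 : ℝ) 1) (ha0 : a ≠ 0)
    (hα : α ∈ Ioo 0 π) (hγ : γ ∈ Icc 0 (π / 2)) :
    (∀ x : Fin 2 → ℝ, 0 ≤ x 1 → w2 α x = 0 →
      ((1 / 2) * x 0 * x 1 + ((a - 1) / 2) * (Real.cos α / Real.sin α) * x 1 ^ 2) * Real.cos γ
        = (a / 2) * x 0 * x 1 * Real.cos γ) ∧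
    ContDiffOn ℝ (⊤ : ℕ∞) (phi α γ a) {x : Fin 2 → ℝ | 0 < x 1 ∧ 0 < w2 α x} ∧
    ContDiffOn ℝ (⊤ : ℕ∞) (phi α γ a) {x : Fin 2 → ℝ | 0 < x 1 ∧ w2 α x < 0} ∧
    (∀ x : Fin 2 → ℝ, 0 < x 1 → w2 α x ≠ 0 → ∀ j : Fin 2,
      HasDerivAt (fun t => phi α γ a (Function.update x j t))
        (Aund α γ a x j - Abreve α γ a x j) (x j)) :=
  gauge_function_general a α γ hα

end MagStep
end
end

section
/- (Quadratic minimization yielding the polynomial P) Let ω > 0, α ∈ (0,π), γ ∈ [0,π/2], a ∈ [−1,1) with a ≠ 0, and Λ ∈ ℝ. For (c₁,c₂,c₃) ∈ ℝ³ let g(θ) = c₁e^{θ} + c₂e^{−θ} for θ ∈ (−π+α, 0] and g(θ) = c₃e^{θ} + (c₁+c₂−c₃)e^{−θ} for θ ∈ (0, α), let s̃(θ) = a on (−π+α,0) and 1 on (0,α), and define J(c₁,c₂,c₃) := (1/(2ω)) ∫_{−π+α}^{α} (g² + g′² − Λ) dθ − (√π cos γ/(4 ω^{3/2})) ∫_{−π+α}^{α}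 s̃ g′ dθ + (1/(2ω²)) ∫_{−π+α}^{α} ( ω² + s̃² sin²γ sin²θ + (1/4) s̃² cos²γ ) dθ. Then J attains its infimum over ℝ³ at a unique point, and this infimum equals A[α,γ,a]·(1/ω)² − (π/2)·Λ·(1/ω) + π/2. -/
open MeasureTheory Real Set Filter

noncomputable section

namespace MagStep

/-- The piecewise-exponential angular function `g`. -/
def gpw (c : ℝ × ℝ × ℝ) (θ : ℝ) : ℝ :=
  if θ ≤ 0 then c.1 * Real.exp θ + c.2.1 * Real.exp (-θ)
  else c.2.2 * Real.exp θ + (c.1 + c.2.1 - c.2.2) * Real.exp (-θ)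

/-- Its piecewise derivative `g'`. -/
def gpwd (c : ℝ × ℝ × ℝ) (θ : ℝ) : ℝ :=
  if θ ≤ 0 then c.1 * Real.exp θ - c.2.1 * Real.exp (-θ)
  else c.2.2 * Real.exp θ - (c.1 + c.2.1 - c.2.2) * Real.exp (-θ)

/-- The angular step function `s̃`: `a` for `θ < 0` and `1` for `θ > 0`. -/
def stg (a θ : ℝ) : ℝ := if θ < 0 then a else 1

/-- The trial energy `J(c₁,c₂,c₃)`. -/
def Jfun (ω α γ a Λ : ℝ) (c : ℝ × ℝ × ℝ) : ℝ :=
  (1 / (2 * ω)) * (∫ θ in Ioo (-π + α) α, (gpw c θ ^ 2 + gpwd c θ ^ 2 - Λ))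
    - (Real.sqrt π * Real.cos γ / (4 * ω ^ ((3 : ℝ) / 2))) *
        (∫ θ in Ioo (-π + α) α, stg a θ * gpwd c θ)
    + (1 / (2 * ω ^ 2)) *
        (∫ θ in Ioo (-π + α) α,
          (ω ^ 2 + stg a θ ^ 2 * Real.sin γ ^ 2 * Real.sin θ ^ 2
            + (1 / 4) * stg a θ ^ 2 * Real.cos γ ^ 2))

/-!
On each of the arcs `(-π + α, 0)` and `(0, α)` the function `g` is a combination of `e^{±θ}`,
so all three integrals in `J` are elementary. With `X = e^α` and `Y = e^π` one gets
`J(c) = (Q(c) - Λπ) / (2ω) - K L(c) + const`, where `K = √π cos γ / (4 ω^{3/2})`, `L` is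
linear and `Q` is a positive combination of the squares of `c₁`, `c₂`, `c₃` and
`c₁ + c₂ - c₃`. If `d` solves the critical-point equations `∇Q(d) = L`, completing the square
gives `J(c) = J(2ωK d) + Q(c - 2ωK d) / (2ω)`. The value `J(2ωK d)` reduces to `A[α,γ,a]`
through `Q(d) = L(d) / 2`.
-/

theorem unique_minimizer_of_eq_add_pos {E : Type*} [AddGroup E] {f q : E → ℝ} {c₀ : E} {m : ℝ}
    (hq₀ : q 0 = 0) (hq : ∀ v ≠ 0, 0 < q v) (hf : ∀ c, f c = m + q (c - c₀)) :
    (∀ c, f c₀ ≤ f c) ∧ (∀ c, (∀ c', f c ≤ f c') → c = c₀) ∧ f c₀ = m := by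
  have hq_nonneg : ∀ v, 0 ≤ q v := fun v => by
    rcases eq_or_ne v 0 with rfl | hv
    · exact hq₀.ge
    · exact (hq v hv).le
  have hmin : f c₀ = m := by rw [hf, sub_self, hq₀, add_zero]
  refine ⟨fun c => by rw [hmin, hf c]; linarith [hq_nonneg (c - c₀)], fun c hc => ?_, hmin⟩
  by_contra hne
  have hpos := hq _ (sub_ne_zero.2 hne)
  linarith [hc c₀, hf c]

theorem setIntegral_Ioo_eq_of_hasDerivAt_piecewise {p m q : ℝ} (hpm : p ≤ m) (hmq : m < q)
    {f f₁ f₂ F₁ F₂ : ℝ → ℝ} (h₁ : ∀ θ ∈ Ioo p m, f θ = f₁ θ) (h₂ : ∀ θ ∈ Ioo m q, f θ = f₂ θ)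
    (hc₁ : Continuous f₁) (hc₂ : Continuous f₂)
    (hd₁ : ∀ θ, HasDerivAt F₁ (f₁ θ) θ) (hd₂ : ∀ θ, HasDerivAt F₂ (f₂ θ) θ) :
    ∫ θ in Ioo p q, f θ = (F₁ m - F₁ p) + (F₂ q - F₂ m) := by
  have hint₁ : IntegrableOn f (Ioc p m) := by
    rw [integrableOn_Ioc_iff_integrableOn_Ioo]
    exact ((hc₁.integrableOn_Ioc.mono_set Ioo_subset_Ioc_self).congr_fun
      (fun x hx => (h₁ x hx).symm) measurableSet_Ioo)
  have hint₂ : IntegrableOn f (Ioo m q) :=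
    ((hc₂.integrableOn_Ioc.mono_set Ioo_subset_Ioc_self).congr_fun
      (fun x hx => (h₂ x hx).symm) measurableSet_Ioo)
  have hdisj : Disjoint (Ioc p m) (Ioo m q) :=
    Set.disjoint_left.2 fun x hx hx' => (not_lt.2 hx.2) hx'.1
  rw [← Ioc_union_Ioo_eq_Ioo hpm hmq, setIntegral_union hdisj measurableSet_Ioo hint₁ hint₂,
    integral_Ioc_eq_integral_Ioo, setIntegral_congr_fun measurableSet_Ioo h₁,
    setIntegral_congr_fun measurableSet_Ioo h₂,
    ← integral_Ioc_eq_integral_Ioo, ← integral_Ioc_eq_integral_Ioo,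
    ← intervalIntegral.integral_of_le hpm, ← intervalIntegral.integral_of_le hmq.le,
    intervalIntegral.integral_eq_sub_of_hasDerivAt (fun x _ => hd₁ x)
      (hc₁.intervalIntegrable _ _),
    intervalIntegral.integral_eq_sub_of_hasDerivAt (fun x _ => hd₂ x)
      (hc₂.intervalIntegrable _ _)]

theorem hasDerivAt_mul_exp_add_mul_exp_neg (p q θ : ℝ) :
    HasDerivAt (fun t => p * exp t + q * exp (-t)) (p * exp θ - q * exp (-θ)) θ := by
  have h := ((hasDerivAt_exp θ).const_mul p).add (((hasDerivAt_neg θ).exp).const_mul q)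
  exact h.congr_deriv (by ring)

theorem hasDerivAt_sq_mul_exp_sq_sub (p q θ : ℝ) :
    HasDerivAt (fun t => p ^ 2 * exp t ^ 2 - q ^ 2 * exp (-t) ^ 2)
      ((p * exp θ + q * exp (-θ)) ^ 2 + (p * exp θ - q * exp (-θ)) ^ 2) θ := by
  have h := (((hasDerivAt_exp θ).pow 2).const_mul (p ^ 2)).sub
    ((((hasDerivAt_neg θ).exp).pow 2).const_mul (q ^ 2))
  exact h.congr_deriv (by push_cast; ring)

theorem hasDerivAt_sub_sin_mul_cos_div_two (θ : ℝ) :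
    HasDerivAt (fun t => t / 2 - sin t * cos t / 2) (sin θ ^ 2) θ := by
  have h := ((hasDerivAt_id θ).div_const 2).sub
    (((hasDerivAt_sin θ).mul (hasDerivAt_cos θ)).div_const 2)
  exact h.congr_deriv (by linear_combination -(sin_sq_add_cos_sq θ) / 2)

def linCoeff₁ (X Y a : ℝ) : ℝ := a * (1 - X / Y) + 1 / X - 1

def linCoeff₂ (X Y a : ℝ) : ℝ := a * (1 - Y / X) + 1 / X - 1

def linCoeff₃ (X : ℝ) : ℝ := X - 1 / X

def linForm (X Y a : ℝ) (c : ℝ × ℝ × ℝ) : ℝ :=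
  linCoeff₁ X Y a * c.1 + linCoeff₂ X Y a * c.2.1 + linCoeff₃ X * c.2.2

def quadForm (X Y : ℝ) (c : ℝ × ℝ × ℝ) : ℝ :=
  (1 - X ^ 2 / Y ^ 2) * c.1 ^ 2 + (Y ^ 2 / X ^ 2 - 1) * c.2.1 ^ 2 + (X ^ 2 - 1) * c.2.2 ^ 2
    + (1 - 1 / X ^ 2) * (c.1 + c.2.1 - c.2.2) ^ 2

def potentialIntegral (α γ a : ℝ) : ℝ :=
  sin γ ^ 2 * (a ^ 2 * ((π - α) / 2 + sin α * cos α / 2) + α / 2 - sin α * cos α / 2)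
    + (1 / 4) * cos γ ^ 2 * (a ^ 2 * (π - α) + α)

theorem integral_gpw_sq_add_gpwd_sq_sub {α : ℝ} (hα₀ : 0 < α) (hαπ : α ≤ π) (Λ : ℝ)
    (c : ℝ × ℝ × ℝ) :
    ∫ θ in Ioo (-π + α) α, (gpw c θ ^ 2 + gpwd c θ ^ 2 - Λ)
      = quadForm (exp α) (exp π) c - Λ * π := by
  rw [setIntegral_Ioo_eq_of_hasDerivAt_piecewise (by linarith) hα₀
      (fun θ hθ => by simp only [gpw, gpwd, if_pos hθ.2.le])
      (fun θ hθ => by simp only [gpw, gpwd, if_neg (not_le.2 hθ.1)])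
      (by fun_prop) (by fun_prop)
      (fun θ => (hasDerivAt_sq_mul_exp_sq_sub c.1 c.2.1 θ).sub (hasDerivAt_mul_const Λ))
      (fun θ => (hasDerivAt_sq_mul_exp_sq_sub c.2.2 (c.1 + c.2.1 - c.2.2) θ).sub
        (hasDerivAt_mul_const Λ))]
  simp only [Pi.sub_apply, exp_add, exp_zero, exp_neg, quadForm]
  field_simp
  ring

theorem integral_stg_mul_gpwd {α : ℝ} (hα₀ : 0 < α) (hαπ : α ≤ π) (a : ℝ) (c : ℝ × ℝ × ℝ) :
    ∫ θ in Ioo (-π + α) α, stg a θ * gpwd c θ = linForm (exp α) (exp π) a c := by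
  rw [setIntegral_Ioo_eq_of_hasDerivAt_piecewise (by linarith) hα₀
      (fun θ hθ => by simp only [stg, gpwd, if_pos hθ.2, if_pos hθ.2.le])
      (fun θ hθ => by simp only [stg, gpwd, if_neg (not_lt.2 hθ.1.le), if_neg (not_le.2 hθ.1),
        one_mul])
      (by fun_prop) (by fun_prop)
      (fun θ => (hasDerivAt_mul_exp_add_mul_exp_neg c.1 c.2.1 θ).const_mul a)
      (hasDerivAt_mul_exp_add_mul_exp_neg c.2.2 (c.1 + c.2.1 - c.2.2))]
  simp only [exp_add, exp_zero, exp_neg, linForm, linCoeff₁, linCoeff₂, linCoeff₃]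
  field_simp
  ring

theorem integral_potential {α : ℝ} (hα₀ : 0 < α) (hαπ : α ≤ π) (ω γ a : ℝ) :
    ∫ θ in Ioo (-π + α) α,
        (ω ^ 2 + stg a θ ^ 2 * sin γ ^ 2 * sin θ ^ 2 + (1 / 4) * stg a θ ^ 2 * cos γ ^ 2)
      = π * ω ^ 2 + potentialIntegral α γ a := by
  have hF : ∀ s θ : ℝ, HasDerivAt
      (fun t => (ω ^ 2 + (1 / 4) * s ^ 2 * cos γ ^ 2) * t
        + s ^ 2 * sin γ ^ 2 * (t / 2 - sin t * cos t / 2))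
      (ω ^ 2 + s ^ 2 * sin γ ^ 2 * sin θ ^ 2 + (1 / 4) * s ^ 2 * cos γ ^ 2) θ := fun s θ =>
    (((hasDerivAt_id θ).const_mul _).add
      ((hasDerivAt_sub_sin_mul_cos_div_two θ).const_mul _)).congr_deriv (by ring)
  rw [setIntegral_Ioo_eq_of_hasDerivAt_piecewise (by linarith) hα₀
      (fun θ hθ => by simp only [stg, if_pos hθ.2])
      (fun θ hθ => by simp only [stg, if_neg (not_lt.2 hθ.1.le)])
      (by fun_prop) (by fun_prop) (hF a) (hF 1)]
  have hs : sin (-π + α) = -sin α := by rw [neg_add_eq_sub, sin_sub_pi]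
  have hc : cos (-π + α) = -cos α := by rw [neg_add_eq_sub, cos_sub_pi]
  simp only [hs, hc, sin_zero, cos_zero, potentialIntegral]
  ring

/-- The value `s` of `c₁ + c₂ - c₃` at the critical point of `quadForm X Y - linForm X Y a`:
each critical-point equation expresses one `cᵢ` through `s`, and `s = c₁ + c₂ - c₃` then
determines `s`. -/
def criticalSum (X Y a : ℝ) : ℝ :=
  ((linCoeff₁ X Y a * Y ^ 2 + linCoeff₂ X Y a * X ^ 2) * (X ^ 2 - 1)
      - linCoeff₃ X * (Y ^ 2 - X ^ 2)) / (4 * (Y ^ 2 - 1) * (X ^ 2 - 1))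

def criticalPoint (X Y a : ℝ) : ℝ × ℝ × ℝ :=
  (Y ^ 2 * (X ^ 2 * linCoeff₁ X Y a - 2 * (X ^ 2 - 1) * criticalSum X Y a)
      / (2 * X ^ 2 * (Y ^ 2 - X ^ 2)),
   (X ^ 2 * linCoeff₂ X Y a - 2 * (X ^ 2 - 1) * criticalSum X Y a) / (2 * (Y ^ 2 - X ^ 2)),
   (X ^ 2 * linCoeff₃ X + 2 * (X ^ 2 - 1) * criticalSum X Y a) / (2 * X ^ 2 * (X ^ 2 - 1)))

@[simp]
theorem quadForm_zero (X Y : ℝ) : quadForm X Y 0 = 0 := by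
  simp [quadForm]

section CompletingTheSquare

variable {X Y : ℝ} (hX : 1 < X) (hXY : X < Y)
include hX hXY

theorem criticalPoint_isCritical (a : ℝ) :
    let d := criticalPoint X Y a
    2 * (1 - X ^ 2 / Y ^ 2) * d.1 + 2 * (1 - 1 / X ^ 2) * (d.1 + d.2.1 - d.2.2)
        = linCoeff₁ X Y a ∧
      2 * (Y ^ 2 / X ^ 2 - 1) * d.2.1 + 2 * (1 - 1 / X ^ 2) * (d.1 + d.2.1 - d.2.2)
        = linCoeff₂ X Y a ∧
      2 * (X ^ 2 - 1) * d.2.2 - 2 * (1 - 1 / X ^ 2) * (d.1 + d.2.1 - d.2.2) = linCoeff₃ X := by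
  have hX₀ : X ≠ 0 := by linarith
  have hY₀ : Y ≠ 0 := by linarith
  have hYX : Y ^ 2 - X ^ 2 ≠ 0 := by nlinarith
  have hX₁ : X ^ 2 - 1 ≠ 0 := by nlinarith
  have hY₁ : Y ^ 2 - 1 ≠ 0 := by nlinarith
  simp only [criticalPoint, criticalSum, linCoeff₁, linCoeff₂, linCoeff₃]
  refine ⟨?_, ?_, ?_⟩ <;> field_simp <;> ring

theorem quadForm_sub_mul_linForm (a t : ℝ) (c : ℝ × ℝ × ℝ) :
    quadForm X Y c - t * linForm X Y a c
      = quadForm X Y (c - t • criticalPoint X Y a)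
        - t ^ 2 * quadForm X Y (criticalPoint X Y a) := by
  obtain ⟨h₁, h₂, h₃⟩ := criticalPoint_isCritical hX hXY a
  simp only [quadForm, linForm, Prod.fst_sub, Prod.snd_sub, Prod.smul_fst, Prod.smul_snd,
    smul_eq_mul]
  linear_combination (t * c.1) * h₁ + (t * c.2.1) * h₂ + (t * c.2.2) * h₃

theorem quadForm_criticalPoint (a : ℝ) :
    quadForm X Y (criticalPoint X Y a) = linForm X Y a (criticalPoint X Y a) / 2 := by
  obtain ⟨h₁, h₂, h₃⟩ := criticalPoint_isCritical hX hXY a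
  simp only [quadForm, linForm]
  linear_combination ((criticalPoint X Y a).1 / 2) * h₁ + ((criticalPoint X Y a).2.1 / 2) * h₂
    + ((criticalPoint X Y a).2.2 / 2) * h₃

theorem quadForm_pos {c : ℝ × ℝ × ℝ} (hc : c ≠ 0) : 0 < quadForm X Y c := by
  have hX₀ : 0 < X := by linarith
  have hY₀ : 0 < Y := by linarith
  have h₁ : 0 < 1 - X ^ 2 / Y ^ 2 := by
    rw [sub_pos, div_lt_one (by positivity)]; nlinarith
  have h₂ : 0 < Y ^ 2 / X ^ 2 - 1 := by
    rw [sub_pos, lt_div_iff₀ (by positivity)]; nlinarith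
  have h₃ : 0 < X ^ 2 - 1 := by nlinarith
  have h₄ : 0 < 1 - 1 / X ^ 2 := by
    rw [sub_pos, div_lt_one (by positivity)]; nlinarith
  obtain ⟨c₁, c₂, c₃⟩ := c
  have n₁ := mul_nonneg h₁.le (sq_nonneg c₁)
  have n₂ := mul_nonneg h₂.le (sq_nonneg c₂)
  have n₃ := mul_nonneg h₃.le (sq_nonneg c₃)
  have n₄ := mul_nonneg h₄.le (sq_nonneg (c₁ + c₂ - c₃))
  simp only [ne_eq, Prod.mk_eq_zero, not_and_or] at hc
  unfold quadForm
  rcases hc with hc | hc | hc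
  · linarith [mul_pos h₁ (sq_pos_of_ne_zero hc)]
  · linarith [mul_pos h₂ (sq_pos_of_ne_zero hc)]
  · linarith [mul_pos h₃ (sq_pos_of_ne_zero hc)]

end CompletingTheSquare

theorem Aconst_eq {α : ℝ} (hα : α ∈ Ioo 0 π) (γ a : ℝ) :
    Aconst α γ a = potentialIntegral α γ a / 2
      - π * cos γ ^ 2 * quadForm (exp α) (exp π) (criticalPoint (exp α) (exp π) a) / 8 := by
  have hX : 1 < exp α := one_lt_exp_iff.2 hα.1
  have hXY : exp α < exp π := exp_lt_exp.2 hα.2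
  have hcoth : cosh π / sinh π = (exp π ^ 2 + 1) / (exp π ^ 2 - 1) := by
    have : exp π ^ 2 - 1 ≠ 0 := by nlinarith
    rw [cosh_eq, sinh_eq, exp_neg]; field_simp
  have hcosh : cosh π = (exp π ^ 2 + 1) / (2 * exp π) := by
    rw [cosh_eq, exp_neg]; field_simp
  have hexp_two_mul (x : ℝ) : exp (2 * x) = exp x ^ 2 := by
    rw [← exp_nat_mul]; push_cast; ring_nf
  rw [quadForm_criticalPoint hX hXY, Aconst, potentialIntegral, hcoth, hcosh, exp_sub,
    ← mul_sub, hexp_two_mul, hexp_two_mul, hexp_two_mul, exp_sub, cos_two_mul', sin_two_mul,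
    cos_sq' γ]
  set X := exp α
  set Y := exp π
  have hX₀ : X ≠ 0 := by linarith
  have hY₀ : Y ≠ 0 := by linarith
  have hYX : Y ^ 2 - X ^ 2 ≠ 0 := by nlinarith
  have hX₁ : X ^ 2 - 1 ≠ 0 := by nlinarith
  have hY₁ : Y ^ 2 - 1 ≠ 0 := by nlinarith
  simp only [linForm, criticalPoint, criticalSum, linCoeff₁, linCoeff₂, linCoeff₃]
  field_simp
  ring

def trialMinimizer (ω α γ a : ℝ) : ℝ × ℝ × ℝ :=
  (2 * ω * (√π * cos γ / (4 * ω ^ ((3 : ℝ) / 2)))) • criticalPoint (exp α) (exp π) a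

theorem Jfun_eq_add {ω α : ℝ} (hω : 0 < ω) (hα : α ∈ Ioo 0 π) (γ a Λ : ℝ) (c : ℝ × ℝ × ℝ) :
    Jfun ω α γ a Λ c = (Aconst α γ a * (1 / ω) ^ 2 - (π / 2) * Λ * (1 / ω) + π / 2)
      + quadForm (exp α) (exp π) (c - trialMinimizer ω α γ a) / (2 * ω) := by
  have hX : 1 < exp α := one_lt_exp_iff.2 hα.1
  have hXY : exp α < exp π := exp_lt_exp.2 hα.2
  have hK : (2 * ω * (√π * cos γ / (4 * ω ^ ((3 : ℝ) / 2)))) ^ 2 = π * cos γ ^ 2 / (4 * ω) := by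
    have h32 : (ω ^ ((3 : ℝ) / 2)) ^ 2 = ω ^ 3 := by
      rw [← rpow_natCast, ← rpow_mul hω.le]; norm_num
    simp only [mul_pow, div_pow, sq_sqrt pi_pos.le, h32]
    field_simp
    ring
  rw [Jfun, integral_gpw_sq_add_gpwd_sq_sub hα.1 hα.2.le, integral_stg_mul_gpwd hα.1 hα.2.le,
    integral_potential hα.1 hα.2.le, Aconst_eq hα, trialMinimizer]
  generalize √π * cos γ / (4 * ω ^ ((3 : ℝ) / 2)) = K at hK ⊢
  have hsq := quadForm_sub_mul_linForm hX hXY a (2 * ω * K) c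
  linear_combination (norm := skip) (1 / (2 * ω)) * hsq
    - quadForm (exp α) (exp π) (criticalPoint (exp α) (exp π) a) / (2 * ω) * hK
  field_simp
  ring

theorem J_attains_min_general (ω α γ a Λ : ℝ) (hω : 0 < ω) (hα : α ∈ Ioo 0 π) :
    ∃ c : ℝ × ℝ × ℝ,
      (∀ c' : ℝ × ℝ × ℝ, Jfun ω α γ a Λ c ≤ Jfun ω α γ a Λ c') ∧
      (∀ c' : ℝ × ℝ × ℝ,
        (∀ c'' : ℝ × ℝ × ℝ, Jfun ω α γ a Λ c' ≤ Jfun ω α γ a Λ c'') → c' = c) ∧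
      Jfun ω α γ a Λ c
        = Aconst α γ a * (1 / ω) ^ 2 - (π / 2) * Λ * (1 / ω) + π / 2 :=
  have hX : 1 < exp α := one_lt_exp_iff.2 hα.1
  have hXY : exp α < exp π := exp_lt_exp.2 hα.2
  ⟨trialMinimizer ω α γ a, unique_minimizer_of_eq_add_pos (by simp)
    (fun _ hv => div_pos (quadForm_pos hX hXY hv) (by positivity)) (Jfun_eq_add hω hα γ a Λ)⟩

/-- **Quadratic minimization yielding the polynomial `P`.** `J` attains its infimum over `ℝ³`
at a unique point, with minimum value `A[α,γ,a] (1/ω)² - (π/2) Λ (1/ω) + π/2`. -/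
theorem J_attains_min (ω α γ a Λ : ℝ) (hω : 0 < ω) (hα : α ∈ Ioo 0 π)
    (hγ : γ ∈ Icc 0 (π / 2)) (ha : a ∈ Ico (-1 : ℝ) 1) (ha0 : a ≠ 0) :
    ∃ c : ℝ × ℝ × ℝ,
      (∀ c' : ℝ × ℝ × ℝ, Jfun ω α γ a Λ c ≤ Jfun ω α γ a Λ c') ∧
      (∀ c' : ℝ × ℝ × ℝ,
        (∀ c'' : ℝ × ℝ × ℝ, Jfun ω α γ a Λ c' ≤ Jfun ω α γ a Λ c'') → c' = c) ∧
      Jfun ω α γ a Λ c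
        = Aconst α γ a * (1 / ω) ^ 2 - (π / 2) * Λ * (1 / ω) + π / 2 :=
  J_attains_min_general ω α γ a Λ hω hα

end MagStep
end
end
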